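/- The posets Iso(ℤ₂ × ℤ₆ × ℤ₁₈) and Iso(ℤ₇ × ℤ₆₁₂₅) are order isomorphic, where ℤ_m denotes the cyclic group of order m. -/
import Mathlib

/-- The setoid on subgroups of `G` given by group isomorphism. -/
def isoSetoid (G : Type*) [Group G] : Setoid (Subgroup G) where
  r H K := Nonempty (H ≃* K)
  iseqv := ⟨fun H => ⟨MulEquiv.refl H⟩, fun ⟨e⟩ => ⟨e.symm⟩, fun ⟨e⟩ ⟨f⟩ => ⟨e.trans f⟩⟩

/-- `IsoClasses G` is the set of equivalence classes of subgroups of `G`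
under group isomorphism. -/
def IsoClasses (G : Type*) [Group G] : Type _ := Quotient (isoSetoid G)

/-- The class of a subgroup `H` in `IsoClasses G`. -/
def IsoCls {G : Type*} [Group G] (H : Subgroup G) : IsoClasses G :=
  Quotient.mk (isoSetoid G) H

/-- `[H] ≤ [K]` iff some member of `[H]` is contained in some member of `[K]`. -/
instance instLEIsoClasses (G : Type*) [Group G] : LE (IsoClasses G) where
  le x y := ∃ H K : Subgroup G, IsoCls H = x ∧ IsoCls K = y ∧ H ≤ K

section Generic

variable {G : Type*} [Group G]

lemma isoCls_eq_iff {H K : Subgroup G} : IsoCls H = IsoCls K ↔ Nonempty (H ≃* K) :=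
  ⟨fun h => Quotient.exact h, fun h => Quotient.sound h⟩

lemma isoClasses_le_def {x y : IsoClasses G} :
    x ≤ y ↔ ∃ H K : Subgroup G, IsoCls H = x ∧ IsoCls K = y ∧ H ≤ K := Iff.rfl

/-- Generic constructor for an order isomorphism from `IsoClasses G` to an indexing poset,
given a monotone family of representative subgroups. -/
lemma nonempty_orderIso_of_reps {ι : Type*} [LE ι] (r : ι → Subgroup G)
    (hsurj : ∀ H : Subgroup G, ∃ i, Nonempty (H ≃* r i))
    (hinj : ∀ i j, Nonempty ((r i : Subgroup G) ≃* r j) → i = j)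
    (hmono : ∀ i j : ι, i ≤ j → r i ≤ r j)
    (hle : ∀ (H K : Subgroup G) (i j : ι), H ≤ K → Nonempty (H ≃* r i) →
      Nonempty (K ≃* r j) → i ≤ j) :
    Nonempty (IsoClasses G ≃o ι) := by
  classical
  let idx : Subgroup G → ι := fun H => (hsurj H).choose
  have hidx : ∀ H : Subgroup G, Nonempty ((H : Subgroup G) ≃* r (idx H)) :=
    fun H => (hsurj H).choose_spec
  have hwd : ∀ H K : Subgroup G, Nonempty ((H : Subgroup G) ≃* K) → idx H = idx K := by
    rintro H K ⟨e⟩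
    obtain ⟨eH⟩ := hidx H
    obtain ⟨eK⟩ := hidx K
    exact hinj _ _ ⟨(eH.symm.trans e).trans eK⟩
  let f : IsoClasses G → ι := Quotient.lift idx hwd
  have hleft : ∀ x : IsoClasses G, IsoCls (r (f x)) = x := by
    intro x
    induction x using Quotient.ind with
    | _ H => exact isoCls_eq_iff.mpr ⟨(hidx H).some.symm⟩
  have hright : ∀ i : ι, f (IsoCls (r i)) = i :=
    fun i => hinj _ _ ⟨(hidx (r i)).some.symm⟩
  refine ⟨⟨⟨f, fun i => IsoCls (r i), hleft, hright⟩, ?_⟩⟩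
  intro x y
  constructor
  · intro h
    exact ⟨r (f x), r (f y), hleft x, hleft y, hmono _ _ h⟩
  · rintro ⟨H, K, rfl, rfl, hHK⟩
    exact hle H K _ _ hHK (hidx H) (hidx K)

end Generic
section Congr

variable {G G' : Type*} [Group G] [Group G']

private lemma mapmap_eq (e : G ≃* G') (H : Subgroup G) :
    (H.map e.toMonoidHom).map e.symm.toMonoidHom = H := by
  ext x
  simp [Subgroup.mem_map_equiv]

private def mapCls (e : G ≃* G') : IsoClasses G → IsoClasses G' :=
  Quotient.lift (fun H => IsoCls (H.map e.toMonoidHom)) (by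
    rintro H K ⟨i⟩
    exact isoCls_eq_iff.mpr
      ⟨((e.subgroupMap H).symm.trans i).trans (e.subgroupMap K)⟩)

private lemma mapCls_isoCls (e : G ≃* G') (H : Subgroup G) :
    mapCls e (IsoCls H) = IsoCls (H.map e.toMonoidHom) := rfl

private lemma mapCls_mono (e : G ≃* G') {x y : IsoClasses G} (h : x ≤ y) :
    mapCls e x ≤ mapCls e y := by
  obtain ⟨H, K, rfl, rfl, hHK⟩ := h
  exact ⟨H.map e.toMonoidHom, K.map e.toMonoidHom, rfl, rfl, Subgroup.map_mono hHK⟩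

private lemma mapCls_symm_apply (e : G ≃* G') (x : IsoClasses G) :
    mapCls e.symm (mapCls e x) = x := by
  induction x using Quotient.ind with
  | _ H =>
    show IsoCls ((H.map e.toMonoidHom).map e.symm.toMonoidHom) = IsoCls H
    rw [mapmap_eq]

lemma nonempty_orderIso_congr (e : G ≃* G') :
    Nonempty (IsoClasses G ≃o IsoClasses G') := by
  refine ⟨⟨⟨mapCls e, mapCls e.symm, mapCls_symm_apply e, ?_⟩, ?_⟩⟩
  · intro y
    have := mapCls_symm_apply e.symm y
    rwa [MulEquiv.symm_symm] at this
  · intro x y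
    constructor
    · intro h
      have := mapCls_mono e.symm (show mapCls e x ≤ mapCls e y from h)
      rwa [mapCls_symm_apply, mapCls_symm_apply] at this
    · exact mapCls_mono e

end Congr
section PowSub

/-- The subgroup of elements whose `m`-th power is trivial, in a commutative group. -/
def powSub (G : Type*) [CommGroup G] (m : ℕ) : Subgroup G where
  carrier := {x | x ^ m = 1}
  one_mem' := one_pow m
  mul_mem' := by
    intro a b ha hb
    simp only [Set.mem_setOf_eq] at *
    rw [mul_pow, ha, hb, mul_one]
  inv_mem' := by
    intro a ha
    simp only [Set.mem_setOf_eq] at *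
    rw [inv_pow, ha, inv_one]

lemma mem_powSub {G : Type*} [CommGroup G] {m : ℕ} {x : G} :
    x ∈ powSub G m ↔ x ^ m = 1 := Iff.rfl

/-- A group isomorphism restricts to the `m`-torsion subgroups. -/
def powSubCongr {G G' : Type*} [CommGroup G] [CommGroup G'] (e : G ≃* G') (m : ℕ) :
    powSub G m ≃* powSub G' m where
  toFun x := ⟨e (x : G), by
    have hx : (x : G) ^ m = 1 := x.2
    rw [mem_powSub, ← map_pow, hx, map_one]⟩
  invFun y := ⟨e.symm (y : G'), by
    have hy : (y : G') ^ m = 1 := y.2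
    rw [mem_powSub, ← map_pow, hy, map_one]⟩
  left_inv x := Subtype.ext (e.symm_apply_apply (x : G))
  right_inv y := Subtype.ext (e.apply_symm_apply (y : G'))
  map_mul' x y := Subtype.ext (map_mul e (x : G) (y : G))

end PowSub

section ProdDecomp

variable {A B : Type*} [CommGroup A] [CommGroup B] [Finite A] [Finite B]

omit [Finite B] in
lemma inl_mem_of_mem (hcop : (Nat.card A).Coprime (Nat.card B))
    {H : Subgroup (A × B)} {a : A} {b : B} (hab : (a, b) ∈ H) :
    (a, (1 : B)) ∈ H := by
  have hb : b ^ (Nat.card B) = 1 := pow_card_eq_one'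
  have hd : (orderOf a).Coprime (Nat.card B) :=
    Nat.Coprime.coprime_dvd_left (orderOf_dvd_natCard a) hcop
  have hmod : (Nat.card B) ^ Nat.totient (orderOf a) ≡ 1 [MOD orderOf a] :=
    Nat.ModEq.pow_totient hd.symm
  have key : a ^ ((Nat.card B) ^ Nat.totient (orderOf a)) = a := by
    have := (pow_eq_pow_iff_modEq (x := a)).mpr hmod
    rwa [pow_one] at this
  have hb1 : b ^ ((Nat.card B) ^ Nat.totient (orderOf a)) = 1 := by
    obtain ⟨c, hc⟩ : (Nat.card B) ∣ (Nat.card B) ^ Nat.totient (orderOf a) :=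
      dvd_pow_self _ (Nat.totient_pos.mpr (orderOf_pos a)).ne'
    rw [hc, pow_mul, hb, one_pow]
  have hbig : (a, b) ^ ((Nat.card B) ^ Nat.totient (orderOf a)) ∈ H := pow_mem hab _
  have heq : ((a, b) : A × B) ^ ((Nat.card B) ^ Nat.totient (orderOf a)) = (a, (1 : B)) := by
    rw [Prod.pow_mk, key, hb1]
  rwa [heq] at hbig

lemma prod_decomp (hcop : (Nat.card A).Coprime (Nat.card B)) (H : Subgroup (A × B)) :
    (H.comap (MonoidHom.inl A B)).prod (H.comap (MonoidHom.inr A B)) = H := by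
  ext x
  obtain ⟨a, b⟩ := x
  simp only [Subgroup.mem_prod, Subgroup.mem_comap, MonoidHom.inl_apply, MonoidHom.inr_apply]
  constructor
  · rintro ⟨ha, hb⟩
    have := mul_mem ha hb
    simpa using this
  · intro hab
    have h1 : (a, (1 : B)) ∈ H := inl_mem_of_mem hcop hab
    refine ⟨h1, ?_⟩
    have := mul_mem (inv_mem h1) hab
    simpa using this

omit [CommGroup A] [Finite A] [Finite B] in
lemma order_eq_one_of_coprime (hcop : (Nat.card A).Coprime (Nat.card B))
    {b : B} (hb : b ^ (Nat.card A) = 1) : b = 1 := by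
  have h1 : orderOf b ∣ Nat.card A := orderOf_dvd_of_pow_eq_one hb
  have h2 : orderOf b ∣ Nat.card B := orderOf_dvd_natCard b
  have h3 : orderOf b ∣ Nat.gcd (Nat.card A) (Nat.card B) := Nat.dvd_gcd h1 h2
  rw [Nat.coprime_iff_gcd_eq_one.mp hcop] at h3
  exact orderOf_eq_one_iff.mp (Nat.dvd_one.mp h3)

/-- The left factor of the coprime decomposition is the `card A`-torsion subgroup. -/
noncomputable def leftPartEquiv (hcop : (Nat.card A).Coprime (Nat.card B))
    (H : Subgroup (A × B)) :
    H.comap (MonoidHom.inl A B) ≃* powSub H (Nat.card A) := by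
  have hp : ∀ x : H.comap (MonoidHom.inl A B),
      (⟨((x : A), (1 : B)), x.2⟩ : H) ∈ powSub H (Nat.card A) := by
    intro x
    rw [mem_powSub]
    apply Subtype.ext
    show (((x : A), (1 : B)) : A × B) ^ (Nat.card A) = ((1, 1) : A × B)
    rw [Prod.pow_mk, pow_card_eq_one', one_pow]
  refine MulEquiv.ofBijective
    (MonoidHom.mk' (fun x => ⟨⟨((x : A), (1 : B)), x.2⟩, hp x⟩) ?_) ⟨?_, ?_⟩
  · intro x y
    apply Subtype.ext
    apply Subtype.ext
    show ((((x * y : _) : A), (1 : B)) : A × B) = ((x : A), (1 : B)) * ((y : A), (1 : B))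
    rw [Prod.mk_mul_mk, mul_one]
    rfl
  · intro x y h
    apply Subtype.ext
    exact congrArg (fun z : powSub H (Nat.card A) => (((z : H) : A × B)).1) h
  · rintro ⟨⟨⟨a, b⟩, hmem⟩, hpow⟩
    rw [mem_powSub] at hpow
    have hpow' : ((a, b) : A × B) ^ (Nat.card A) = 1 := by
      have := congrArg (Subtype.val) hpow
      simpa using this
    rw [Prod.pow_mk, Prod.mk_eq_one] at hpow'
    have hb1 : b = 1 := order_eq_one_of_coprime hcop hpow'.2
    subst hb1
    exact ⟨⟨a, hmem⟩, rfl⟩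

/-- The right factor of the coprime decomposition is the `card B`-torsion subgroup. -/
noncomputable def rightPartEquiv (hcop : (Nat.card A).Coprime (Nat.card B))
    (H : Subgroup (A × B)) :
    H.comap (MonoidHom.inr A B) ≃* powSub H (Nat.card B) := by
  have hp : ∀ x : H.comap (MonoidHom.inr A B),
      (⟨((1 : A), (x : B)), x.2⟩ : H) ∈ powSub H (Nat.card B) := by
    intro x
    rw [mem_powSub]
    apply Subtype.ext
    show (((1 : A), (x : B)) : A × B) ^ (Nat.card B) = ((1, 1) : A × B)
    rw [Prod.pow_mk, pow_card_eq_one', one_pow]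
  refine MulEquiv.ofBijective
    (MonoidHom.mk' (fun x => ⟨⟨((1 : A), (x : B)), x.2⟩, hp x⟩) ?_) ⟨?_, ?_⟩
  · intro x y
    apply Subtype.ext
    apply Subtype.ext
    show (((1 : A), ((x * y : _) : B)) : A × B) = ((1 : A), (x : B)) * ((1 : A), (y : B))
    rw [Prod.mk_mul_mk, mul_one]
    rfl
  · intro x y h
    apply Subtype.ext
    exact congrArg (fun z : powSub H (Nat.card B) => (((z : H) : A × B)).2) h
  · rintro ⟨⟨⟨a, b⟩, hmem⟩, hpow⟩
    rw [mem_powSub] at hpow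
    have hpow' : ((a, b) : A × B) ^ (Nat.card B) = 1 := by
      have := congrArg (Subtype.val) hpow
      simpa using this
    rw [Prod.pow_mk, Prod.mk_eq_one] at hpow'
    have ha1 : a = 1 := order_eq_one_of_coprime hcop.symm hpow'.1
    subst ha1
    exact ⟨⟨b, hmem⟩, rfl⟩

omit [Finite A] [Finite B] in
lemma comap_inl_prod (P : Subgroup A) (Q : Subgroup B) :
    (P.prod Q).comap (MonoidHom.inl A B) = P := by
  ext a
  simp only [Subgroup.mem_comap, MonoidHom.inl_apply, Subgroup.mem_prod]
  exact ⟨fun h => h.1, fun h => ⟨h, Q.one_mem⟩⟩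

omit [Finite A] [Finite B] in
lemma comap_inr_prod (P : Subgroup A) (Q : Subgroup B) :
    (P.prod Q).comap (MonoidHom.inr A B) = Q := by
  ext b
  simp only [Subgroup.mem_comap, MonoidHom.inr_apply, Subgroup.mem_prod]
  exact ⟨fun h => h.2, fun h => ⟨P.one_mem, h⟩⟩

end ProdDecomp
section ProdIso

variable {A B : Type*} [CommGroup A] [CommGroup B] [Finite A] [Finite B]

/-- The isomorphism class of a coprime product is determined componentwise. -/
lemma nonempty_orderIso_prod (hcop : (Nat.card A).Coprime (Nat.card B)) :
    Nonempty (IsoClasses (A × B) ≃o IsoClasses A × IsoClasses B) := by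
  classical
  -- invariance of the components under abstract isomorphism
  have compA : ∀ (H K : Subgroup (A × B)), (H ≃* K) →
      Nonempty ((H.comap (MonoidHom.inl A B) : Subgroup A) ≃*
        (K.comap (MonoidHom.inl A B) : Subgroup A)) := by
    intro H K e
    exact ⟨((leftPartEquiv hcop H).trans (powSubCongr e (Nat.card A))).trans
      (leftPartEquiv hcop K).symm⟩
  have compB : ∀ (H K : Subgroup (A × B)), (H ≃* K) →
      Nonempty ((H.comap (MonoidHom.inr A B) : Subgroup B) ≃*
        (K.comap (MonoidHom.inr A B) : Subgroup B)) := by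
    intro H K e
    exact ⟨((rightPartEquiv hcop H).trans (powSubCongr e (Nat.card B))).trans
      (rightPartEquiv hcop K).symm⟩
  let g : IsoClasses (A × B) → IsoClasses A × IsoClasses B :=
    Quotient.lift (fun H => (IsoCls (H.comap (MonoidHom.inl A B)),
        IsoCls (H.comap (MonoidHom.inr A B)))) (by
      rintro H K ⟨e⟩
      exact Prod.ext (isoCls_eq_iff.mpr (compA H K e)) (isoCls_eq_iff.mpr (compB H K e)))
  -- iso of products from iso of factors
  have prodIso : ∀ (P P' : Subgroup A) (Q Q' : Subgroup B), (P ≃* P') → (Q ≃* Q') →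
      ((P.prod Q : Subgroup (A × B)) ≃* (P'.prod Q' : Subgroup (A × B))) := by
    intro P P' Q Q' eP eQ
    exact ((P.prodEquiv Q).trans (eP.prodCongr eQ)).trans (P'.prodEquiv Q').symm
  let g' : IsoClasses A × IsoClasses B → IsoClasses (A × B) := fun x =>
    Quotient.lift₂ (fun (P : Subgroup A) (Q : Subgroup B) => IsoCls (P.prod Q))
      (by
        rintro P Q P' Q' ⟨eP⟩ ⟨eQ⟩
        exact isoCls_eq_iff.mpr ⟨prodIso P P' Q Q' eP eQ⟩) x.1 x.2
  have hleft : ∀ x : IsoClasses (A × B), g' (g x) = x := by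
    intro x
    induction x using Quotient.ind with
    | _ H =>
      show IsoCls ((H.comap (MonoidHom.inl A B)).prod (H.comap (MonoidHom.inr A B))) = IsoCls H
      rw [prod_decomp hcop H]
  have hright : ∀ y : IsoClasses A × IsoClasses B, g (g' y) = y := by
    rintro ⟨y1, y2⟩
    induction y1 using Quotient.ind with
    | _ P =>
      induction y2 using Quotient.ind with
      | _ Q =>
        show (IsoCls ((P.prod Q).comap (MonoidHom.inl A B)),
            IsoCls ((P.prod Q).comap (MonoidHom.inr A B))) = _
        rw [comap_inl_prod, comap_inr_prod]
        rfl
  refine ⟨⟨⟨g, g', hleft, hright⟩, ?_⟩⟩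
  intro x y
  show g x ≤ g y ↔ x ≤ y
  constructor
  · intro h
    induction x using Quotient.ind with
    | _ H =>
      induction y using Quotient.ind with
      | _ K =>
        obtain ⟨h1, h2⟩ := Prod.le_def.mp h
        obtain ⟨P, P', hP, hP', hPP⟩ := h1
        obtain ⟨Q, Q', hQ, hQ', hQQ⟩ := h2
        refine ⟨P.prod Q, P'.prod Q', ?_, ?_, Subgroup.prod_mono hPP hQQ⟩
        · obtain ⟨eP⟩ := isoCls_eq_iff.mp hP
          obtain ⟨eQ⟩ := isoCls_eq_iff.mp hQ
          have : IsoCls (P.prod Q) =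
              IsoCls ((H.comap (MonoidHom.inl A B)).prod (H.comap (MonoidHom.inr A B))) :=
            isoCls_eq_iff.mpr ⟨prodIso _ _ _ _ eP eQ⟩
          rw [this, prod_decomp hcop H]
          rfl
        · obtain ⟨eP⟩ := isoCls_eq_iff.mp hP'
          obtain ⟨eQ⟩ := isoCls_eq_iff.mp hQ'
          have : IsoCls (P'.prod Q') =
              IsoCls ((K.comap (MonoidHom.inl A B)).prod (K.comap (MonoidHom.inr A B))) :=
            isoCls_eq_iff.mpr ⟨prodIso _ _ _ _ eP eQ⟩
          rw [this, prod_decomp hcop K]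
          rfl
  · rintro ⟨H, K, rfl, rfl, hHK⟩
    refine Prod.le_def.mpr ⟨?_, ?_⟩
    · exact ⟨H.comap (MonoidHom.inl A B), K.comap (MonoidHom.inl A B), rfl, rfl,
        Subgroup.comap_mono hHK⟩
    · exact ⟨H.comap (MonoidHom.inr A B), K.comap (MonoidHom.inr A B), rfl, rfl,
        Subgroup.comap_mono hHK⟩

end ProdIso
section Helpers

lemma card_multiplicative (α : Type*) : Nat.card (Multiplicative α) = Nat.card α :=
  Nat.card_congr Multiplicative.toAdd

lemma card_subgroup_prod {A B : Type*} [Group A] [Group B] (P : Subgroup A) (Q : Subgroup B) :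
    Nat.card (P.prod Q) = Nat.card P * Nat.card Q := by
  rw [Nat.card_congr (P.prodEquiv Q).toEquiv, Nat.card_prod]

lemma zmod_pow_card (p : ℕ) (y : Multiplicative (ZMod p)) : y ^ p = 1 := by
  rw [← ofAdd_toAdd y, ← ofAdd_nsmul]
  have : p • Multiplicative.toAdd y = 0 := by
    simp [nsmul_eq_mul, ZMod.natCast_self]
  rw [this]
  rfl

lemma subgroup_pow_eq_one {G : Type*} [Group G] {p : ℕ} (hexp : ∀ x : G, x ^ p = 1)
    (H : Subgroup G) (x : H) : x ^ p = 1 := by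
  apply Subtype.ext
  rw [SubmonoidClass.coe_pow]
  exact hexp (x : G)

private lemma addEquiv_of_card_eq {p : ℕ} [Fact p.Prime] (V W : Type*)
    [AddCommGroup V] [AddCommGroup W] [Module (ZMod p) V] [Module (ZMod p) W]
    [Finite V] [Finite W] (h : Nat.card V = Nat.card W) : Nonempty (V ≃+ W) := by
  have hp : p.Prime := Fact.out
  haveI : NeZero p := ⟨hp.ne_zero⟩
  haveI : Fintype V := Fintype.ofFinite _
  haveI : Fintype W := Fintype.ofFinite _
  have h1 : Fintype.card V = (Fintype.card (ZMod p)) ^ Module.finrank (ZMod p) V :=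
    Module.card_eq_pow_finrank
  have h2 : Fintype.card W = (Fintype.card (ZMod p)) ^ Module.finrank (ZMod p) W :=
    Module.card_eq_pow_finrank
  have hzc : Fintype.card (ZMod p) = p := ZMod.card p
  rw [hzc] at h1 h2
  have hcc := h
  rw [Nat.card_eq_fintype_card, Nat.card_eq_fintype_card, h1, h2] at hcc
  have hrank : Module.finrank (ZMod p) V = Module.finrank (ZMod p) W :=
    Nat.pow_right_injective hp.two_le hcc
  exact ⟨(LinearEquiv.ofFinrankEq V W hrank).toAddEquiv⟩

/-- Two finite commutative groups of exponent dividing a prime `p` and of the same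
cardinality are isomorphic. -/
lemma mulEquiv_of_exponent_p {p : ℕ} [Fact p.Prime] {G H : Type*} [CommGroup G] [CommGroup H]
    [Finite G] [Finite H] (hG : ∀ x : G, x ^ p = 1) (hH : ∀ x : H, x ^ p = 1)
    (hcard : Nat.card G = Nat.card H) : Nonempty (G ≃* H) := by
  have hp : p.Prime := Fact.out
  haveI : NeZero p := ⟨hp.ne_zero⟩
  letI : Module (ZMod p) (Additive G) := AddCommGroup.zmodModule (by
    intro x
    apply Additive.toMul.injective
    rw [toMul_nsmul]
    exact hG x.toMul)
  letI : Module (ZMod p) (Additive H) := AddCommGroup.zmodModule (by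
    intro x
    apply Additive.toMul.injective
    rw [toMul_nsmul]
    exact hH x.toMul)
  have hcard' : Nat.card (Additive G) = Nat.card (Additive H) := by
    rw [Nat.card_congr Additive.toMul, Nat.card_congr Additive.toMul]
    exact hcard
  obtain ⟨e⟩ := addEquiv_of_card_eq (p := p) (Additive G) (Additive H) hcard'
  exact ⟨MulEquiv.toAdditive.symm e⟩

end Helpers
section LemE

variable (p : ℕ) [Fact p.Prime]

lemma card_multZMod (n : ℕ) : Nat.card (Multiplicative (ZMod n)) = n := by
  rw [card_multiplicative, Nat.card_zmod]

lemma lemE :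
    Nonempty (IsoClasses (Multiplicative (ZMod p) ×
      (Multiplicative (ZMod p) × Multiplicative (ZMod p))) ≃o Fin 4) := by
  have hp : p.Prime := Fact.out
  set G := Multiplicative (ZMod p) × (Multiplicative (ZMod p) × Multiplicative (ZMod p)) with hGdef
  have hexp : ∀ x : G, x ^ p = 1 := by
    intro x
    have h1 : (x ^ p).1 = 1 := by rw [Prod.pow_fst]; exact zmod_pow_card p x.1
    have h2 : (x ^ p).2.1 = 1 := by rw [Prod.pow_snd, Prod.pow_fst]; exact zmod_pow_card p x.2.1
    have h3 : (x ^ p).2.2 = 1 := by rw [Prod.pow_snd, Prod.pow_snd]; exact zmod_pow_card p x.2.2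
    exact Prod.ext h1 (Prod.ext h2 h3)
  have hcardG : Nat.card G = p ^ 3 := by
    rw [Nat.card_prod, Nat.card_prod, card_multZMod]
    ring
  let r : Fin 4 → Subgroup G := fun k =>
    match k with
    | 0 => ⊥
    | 1 => (⊥ : Subgroup (Multiplicative (ZMod p))).prod
        ((⊥ : Subgroup (Multiplicative (ZMod p))).prod ⊤)
    | 2 => (⊥ : Subgroup (Multiplicative (ZMod p))).prod
        (⊤ : Subgroup (Multiplicative (ZMod p) × Multiplicative (ZMod p)))
    | 3 => ⊤
  have hr : ∀ k : Fin 4, Nat.card (r k) = p ^ (k : ℕ) := by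
    intro k
    fin_cases k
    · simp [r, Subgroup.card_bot]
    · rw [show r 1 = (⊥ : Subgroup (Multiplicative (ZMod p))).prod
        ((⊥ : Subgroup (Multiplicative (ZMod p))).prod ⊤) from rfl]
      rw [card_subgroup_prod, card_subgroup_prod, Subgroup.card_bot,
        Subgroup.card_top, card_multZMod]
      simp
    · rw [show r 2 = (⊥ : Subgroup (Multiplicative (ZMod p))).prod
        (⊤ : Subgroup (Multiplicative (ZMod p) × Multiplicative (ZMod p))) from rfl]
      rw [card_subgroup_prod, Subgroup.card_bot, Subgroup.card_top, Nat.card_prod,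
        card_multZMod]
      ring
    · rw [show r 3 = (⊤ : Subgroup G) from rfl, Subgroup.card_top, hcardG]
  refine nonempty_orderIso_of_reps r ?_ ?_ ?_ ?_
  · -- surjectivity
    intro H
    have hdvd : Nat.card H ∣ p ^ 3 := by
      have := Subgroup.card_subgroup_dvd_card H
      rwa [hcardG] at this
    obtain ⟨k, hk, hcard⟩ := (Nat.dvd_prime_pow hp).mp hdvd
    refine ⟨⟨k, by omega⟩, ?_⟩
    exact mulEquiv_of_exponent_p (subgroup_pow_eq_one hexp H) (subgroup_pow_eq_one hexp _)
      (by rw [hcard, hr ⟨k, by omega⟩])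
  · -- injectivity
    rintro i j ⟨e⟩
    have hcc : Nat.card (r i) = Nat.card (r j) := Nat.card_congr e.toEquiv
    rw [hr i, hr j] at hcc
    exact Fin.ext (Nat.pow_right_injective hp.two_le hcc)
  · -- monotone
    intro i j hij
    fin_cases i <;> fin_cases j <;>
      first
        | exact le_rfl
        | exact bot_le
        | exact le_top
        | exact absurd hij (by decide)
        | exact Subgroup.prod_mono (le_refl (⊥ : Subgroup (Multiplicative (ZMod p)))) le_top
  · -- order-forward
    rintro H K i j hHK ⟨e1⟩ ⟨e2⟩
    have h1 : Nat.card H = p ^ (i : ℕ) := by rw [Nat.card_congr e1.toEquiv, hr i]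
    have h2 : Nat.card K = p ^ (j : ℕ) := by rw [Nat.card_congr e2.toEquiv, hr j]
    have hdvd := Subgroup.card_dvd_of_le hHK
    rw [h1, h2] at hdvd
    exact Fin.le_def.mpr ((Nat.pow_dvd_pow_iff_le_right hp.one_lt).mp hdvd)

end LemE

section LemC

variable (p : ℕ) [Fact p.Prime]

lemma lemC :
    Nonempty (IsoClasses (Multiplicative (ZMod (p ^ 3))) ≃o Fin 4) := by
  have hp : p.Prime := Fact.out
  set G := Multiplicative (ZMod (p ^ 3)) with hGdef
  let g : G := Multiplicative.ofAdd 1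
  have hg : orderOf g = p ^ 3 := by
    rw [orderOf_ofAdd_eq_addOrderOf, ZMod.addOrderOf_one]
  have hcardG : Nat.card G = p ^ 3 := card_multZMod _
  let r : Fin 4 → Subgroup G := fun k => Subgroup.zpowers (g ^ (p ^ (3 - (k : ℕ))))
  have hr : ∀ k : Fin 4, Nat.card (r k) = p ^ (k : ℕ) := by
    intro k
    have hk3 : (k : ℕ) ≤ 3 := by omega
    show Nat.card (Subgroup.zpowers (g ^ (p ^ (3 - (k : ℕ))))) = p ^ (k : ℕ)
    rw [Nat.card_zpowers, orderOf_pow, hg,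
      Nat.gcd_eq_right (pow_dvd_pow p (by omega)),
      Nat.pow_div (by omega) hp.pos]
    congr 1
    omega
  refine nonempty_orderIso_of_reps r ?_ ?_ ?_ ?_
  · -- surjectivity
    intro H
    have hdvd : Nat.card H ∣ p ^ 3 := by
      have := Subgroup.card_subgroup_dvd_card H
      rwa [hcardG] at this
    obtain ⟨k, hk, hcard⟩ := (Nat.dvd_prime_pow hp).mp hdvd
    refine ⟨⟨k, by omega⟩, ⟨mulEquivOfCyclicCardEq ?_⟩⟩
    rw [hcard, hr ⟨k, by omega⟩]
  · rintro i j ⟨e⟩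
    have hcc : Nat.card (r i) = Nat.card (r j) := Nat.card_congr e.toEquiv
    rw [hr i, hr j] at hcc
    exact Fin.ext (Nat.pow_right_injective hp.two_le hcc)
  · intro i j hij
    have hij' : (i : ℕ) ≤ (j : ℕ) := hij
    show Subgroup.zpowers _ ≤ Subgroup.zpowers _
    rw [Subgroup.zpowers_le]
    have key : g ^ (p ^ (3 - (i : ℕ))) = (g ^ (p ^ (3 - (j : ℕ)))) ^ (p ^ ((j : ℕ) - (i : ℕ))) := by
      have h3 : 3 - (j : ℕ) + ((j : ℕ) - (i : ℕ)) = 3 - (i : ℕ) := by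
        have := j.isLt
        omega
      rw [← pow_mul, ← pow_add, h3]
    rw [key]
    exact pow_mem (Subgroup.mem_zpowers _) _
  · rintro H K i j hHK ⟨e1⟩ ⟨e2⟩
    have h1 : Nat.card H = p ^ (i : ℕ) := by rw [Nat.card_congr e1.toEquiv, hr i]
    have h2 : Nat.card K = p ^ (j : ℕ) := by rw [Nat.card_congr e2.toEquiv, hr j]
    have hdvd := Subgroup.card_dvd_of_le hHK
    rw [h1, h2] at hdvd
    exact Fin.le_def.mpr ((Nat.pow_dvd_pow_iff_le_right hp.one_lt).mp hdvd)

end LemC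
section LemM

/-- The 5-element model poset of partitions `(a, b)` with `b ≤ a ≤ 2`, `b ≤ 1`. -/
def MP : Type := {q : ℕ × ℕ // q.2 ≤ q.1 ∧ q.1 ≤ 2 ∧ q.2 ≤ 1}

instance : LE MP := ⟨fun x y => x.1.1 ≤ y.1.1 ∧ x.1.2 ≤ y.1.2⟩

lemma MP.le_def {x y : MP} : x ≤ y ↔ x.1.1 ≤ y.1.1 ∧ x.1.2 ≤ y.1.2 := Iff.rfl

variable (p : ℕ) [Fact p.Prime]

lemma lemM :
    Nonempty (IsoClasses (Multiplicative (ZMod p) × Multiplicative (ZMod (p ^ 2))) ≃o MP) := by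
  classical
  have hp : p.Prime := Fact.out
  set G := Multiplicative (ZMod p) × Multiplicative (ZMod (p ^ 2)) with hGdef
  let g : Multiplicative (ZMod (p ^ 2)) := Multiplicative.ofAdd 1
  have hg : orderOf g = p ^ 2 := by
    rw [orderOf_ofAdd_eq_addOrderOf, ZMod.addOrderOf_one]
  have hgp2 : (g ^ p) ^ p = 1 := by
    have h := pow_orderOf_eq_one g
    rw [hg] at h
    rw [← pow_mul, show p * p = p ^ 2 from (sq p).symm]
    exact h
  -- component representatives
  let Ca : ℕ → Subgroup (Multiplicative (ZMod (p ^ 2))) := fun a =>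
    if a = 0 then ⊥ else if a = 1 then Subgroup.zpowers (g ^ p) else ⊤
  let Cb : ℕ → Subgroup (Multiplicative (ZMod p)) := fun b => if b = 0 then ⊥ else ⊤
  let r : MP → Subgroup G := fun i => (Cb i.1.2).prod (Ca i.1.1)
  have hCa0 : Ca 0 = ⊥ := rfl
  have hCa1 : Ca 1 = Subgroup.zpowers (g ^ p) := rfl
  have hCa2 : Ca 2 = ⊤ := rfl
  have hCb0 : Cb 0 = ⊥ := rfl
  have hCb1 : Cb 1 = ⊤ := rfl
  -- cards
  have hcardCa1 : Nat.card (Ca 1) = p := by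
    rw [hCa1, Nat.card_zpowers, orderOf_pow, hg,
      Nat.gcd_eq_right (dvd_pow_self p two_ne_zero), pow_two, Nat.mul_div_cancel_left _ hp.pos]
  have hCa : ∀ a : ℕ, a ≤ 2 → Nat.card (Ca a) = p ^ a := by
    intro a ha
    match a, ha with
    | 0, _ => rw [hCa0, Subgroup.card_bot, pow_zero]
    | 1, _ => rw [hcardCa1, pow_one]
    | 2, _ => rw [hCa2, Subgroup.card_top, card_multZMod]
  have hCb : ∀ b : ℕ, b ≤ 1 → Nat.card (Cb b) = p ^ b := by
    intro b hb
    match b, hb with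
    | 0, _ => rw [hCb0, Subgroup.card_bot, pow_zero]
    | 1, _ => rw [hCb1, Subgroup.card_top, card_multZMod, pow_one]
  have hr : ∀ i : MP, Nat.card (r i) = p ^ (i.1.1 + i.1.2) := by
    intro i
    obtain ⟨⟨a, b⟩, hba, ha2, hb1⟩ := i
    show Nat.card ((Cb b).prod (Ca a)) = p ^ (a + b)
    rw [card_subgroup_prod, hCa a ha2, hCb b hb1, ← pow_add]
    congr 1
    omega
  have hcardG : Nat.card G = p ^ 3 := by
    rw [Nat.card_prod, card_multZMod, card_multZMod]
    ring
  -- exponent-p property of r(1,1)-type groups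
  have hexp11 : ∀ x : ((⊤ : Subgroup (Multiplicative (ZMod p))).prod (Ca 1) : Subgroup G),
      x ^ p = 1 := by
    rintro ⟨⟨u, v⟩, hu, hv⟩
    apply Subtype.ext
    rw [SubmonoidClass.coe_pow]
    show ((u, v) : G) ^ p = ((1, 1) : G)
    rw [Prod.pow_mk, zmod_pow_card]
    rw [hCa1] at hv
    obtain ⟨k, hk⟩ := Subgroup.mem_zpowers_iff.mp hv
    have hk' : (g ^ p) ^ k = v := hk
    have hv1 : v ^ p = 1 := by
      rw [← hk']
      calc ((g ^ p) ^ k) ^ p = ((g ^ p) ^ p) ^ k := by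
            rw [← zpow_natCast ((g ^ p) ^ k) p, ← zpow_mul, mul_comm, zpow_mul, zpow_natCast]
        _ = 1 := by rw [hgp2, one_zpow]
    rw [hv1]
  -- an element of order p² in r(2,0)-type groups
  have hy : (((1 : Multiplicative (ZMod p)), g) : G) ∈
      ((⊥ : Subgroup (Multiplicative (ZMod p))).prod (Ca 2) : Subgroup G) := by
    rw [hCa2]
    exact ⟨Subgroup.mem_bot.mpr rfl, Subgroup.mem_top _⟩
  have hyord : orderOf (⟨((1 : Multiplicative (ZMod p)), g), hy⟩ :
      ((⊥ : Subgroup (Multiplicative (ZMod p))).prod (Ca 2) : Subgroup G)) = p ^ 2 := by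
    rw [Subgroup.orderOf_mk, Prod.orderOf_mk, orderOf_one, Nat.lcm_one_left, hg]
  -- no isomorphism between the two classes of order p²
  have hni : ¬ Nonempty
      ((((⊥ : Subgroup (Multiplicative (ZMod p))).prod (Ca 2) : Subgroup G)) ≃*
        (((⊤ : Subgroup (Multiplicative (ZMod p))).prod (Ca 1) : Subgroup G))) := by
    rintro ⟨e⟩
    have h1 : orderOf (e ⟨((1 : Multiplicative (ZMod p)), g), hy⟩) = p ^ 2 := by
      rw [MulEquiv.orderOf_eq, hyord]
    have h2 : orderOf (e ⟨((1 : Multiplicative (ZMod p)), g), hy⟩) ∣ p :=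
      orderOf_dvd_of_pow_eq_one (hexp11 _)
    rw [h1] at h2
    have := Nat.le_of_dvd hp.pos h2
    have := hp.two_le
    nlinarith
  -- card of the r(2,0)-type group
  have hc20 : Nat.card (((⊥ : Subgroup (Multiplicative (ZMod p))).prod (Ca 2) : Subgroup G))
      = p ^ 2 := hr ⟨(2, 0), by omega⟩
  have hc11 : Nat.card (((⊤ : Subgroup (Multiplicative (ZMod p))).prod (Ca 1) : Subgroup G))
      = p ^ 2 := by
    have := hr ⟨(1, 1), by omega⟩
    simpa [r, hCb1] using this
  -- r agreement lemmas
  have hr20 : r ⟨(2, 0), by omega⟩ =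
      ((⊥ : Subgroup (Multiplicative (ZMod p))).prod (Ca 2) : Subgroup G) := rfl
  have hr11 : r ⟨(1, 1), by omega⟩ =
      ((⊤ : Subgroup (Multiplicative (ZMod p))).prod (Ca 1) : Subgroup G) := rfl
  refine nonempty_orderIso_of_reps r ?_ ?_ ?_ ?_
  · -- surjectivity of classification
    intro H
    have hdvd : Nat.card H ∣ p ^ 3 := by
      have := Subgroup.card_subgroup_dvd_card H
      rwa [hcardG] at this
    obtain ⟨k, hk, hcard⟩ := (Nat.dvd_prime_pow hp).mp hdvd
    match k, hk with
    | 0, _ =>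
      refine ⟨⟨(0, 0), by omega⟩, ?_⟩
      have hH : H = ⊥ := Subgroup.eq_bot_of_card_eq H (by rw [hcard, pow_zero])
      have hrb : r ⟨(0, 0), by omega⟩ = (⊥ : Subgroup G) := by
        show ((⊥ : Subgroup (Multiplicative (ZMod p))).prod (Ca 0) : Subgroup G) = ⊥
        rw [hCa0, Subgroup.bot_prod_bot]
      rw [hH, hrb]
      exact ⟨MulEquiv.refl _⟩
    | 1, _ =>
      refine ⟨⟨(1, 0), by omega⟩, ?_⟩
      have h10 : Nat.card (r ⟨(1, 0), by omega⟩) = p := by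
        rw [hr ⟨(1, 0), by omega⟩]
        norm_num
      exact ⟨mulEquivOfPrimeCardEq (p := p) (by rw [hcard, pow_one]) h10⟩
    | 2, _ =>
      by_cases hcyc : ∀ x : H, x ^ p = 1
      · refine ⟨⟨(1, 1), by omega⟩, ?_⟩
        rw [hr11]
        exact mulEquiv_of_exponent_p hcyc hexp11 (by rw [hcard, hc11])
      · refine ⟨⟨(2, 0), by omega⟩, ?_⟩
        rw [hr20]
        push_neg at hcyc
        obtain ⟨x, hx⟩ := hcyc
        have hxord : orderOf x = p ^ 2 := by
          have hxdvd : orderOf x ∣ p ^ 2 := by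
            have := orderOf_dvd_natCard x
            rwa [hcard] at this
          obtain ⟨t, ht, hot⟩ := (Nat.dvd_prime_pow hp).mp hxdvd
          match t, ht with
          | 0, _ =>
            exfalso
            apply hx
            have h1 : orderOf x = 1 := by rw [hot, pow_zero]
            rw [orderOf_eq_one_iff.mp h1, one_pow]
          | 1, _ =>
            exfalso
            apply hx
            apply orderOf_dvd_iff_pow_eq_one.mp
            rw [hot, pow_one]
          | 2, _ => exact hot
        haveI : IsCyclic H := isCyclic_of_orderOf_eq_card x (by rw [hxord, hcard])
        haveI : IsCyclic (((⊥ : Subgroup (Multiplicative (ZMod p))).prod (Ca 2) : Subgroup G)) :=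
          isCyclic_of_orderOf_eq_card _ (by rw [hyord, hc20])
        exact ⟨mulEquivOfCyclicCardEq (by rw [hcard, hc20])⟩
    | 3, _ =>
      refine ⟨⟨(2, 1), by omega⟩, ?_⟩
      have hH : H = ⊤ := Subgroup.eq_top_of_card_eq H (by rw [hcard, hcardG])
      have hrt : r ⟨(2, 1), by omega⟩ = (⊤ : Subgroup G) := by
        show ((⊤ : Subgroup (Multiplicative (ZMod p))).prod (Ca 2) : Subgroup G) = ⊤
        rw [hCa2, Subgroup.top_prod_top]
      rw [hH, hrt]
      exact ⟨MulEquiv.refl _⟩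
  · -- injectivity of classification
    rintro ⟨⟨a1, b1⟩, hi⟩ ⟨⟨a2, b2⟩, hj⟩ ⟨e⟩
    have hcc : p ^ (a1 + b1) = p ^ (a2 + b2) := by
      rw [← hr ⟨(a1, b1), hi⟩, ← hr ⟨(a2, b2), hj⟩]
      exact Nat.card_congr e.toEquiv
    have hsum : a1 + b1 = a2 + b2 := Nat.pow_right_injective hp.two_le hcc
    by_cases heq : a1 = a2
    · have : b1 = b2 := by omega
      subst heq this
      rfl
    · exfalso
      obtain ⟨hba1, ha1, hb1⟩ := hi
      obtain ⟨hba2, ha2, hb2⟩ := hj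
      have hdisj : (a1 = 2 ∧ b1 = 0 ∧ a2 = 1 ∧ b2 = 1) ∨
          (a1 = 1 ∧ b1 = 1 ∧ a2 = 2 ∧ b2 = 0) := by omega
      rcases hdisj with ⟨h1, h2, h3, h4⟩ | ⟨h1, h2, h3, h4⟩
      · subst h1; subst h2; subst h3; subst h4
        exact hni ⟨e⟩
      · subst h1; subst h2; subst h3; subst h4
        exact hni ⟨e.symm⟩
  · -- monotonicity of representatives
    rintro ⟨⟨a1, b1⟩, hi⟩ ⟨⟨a2, b2⟩, hj⟩ hij
    obtain ⟨hale, hble⟩ := MP.le_def.mp hij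
    simp only at hale hble
    have hCbm : Cb b1 ≤ Cb b2 := by
      by_cases h1 : b1 = 0
      · simp only [Cb, h1, if_pos]
        exact bot_le
      · have h2 : b2 ≠ 0 := by omega
        simp only [Cb, if_neg h1, if_neg h2]
        exact le_rfl
    have hCam : Ca a1 ≤ Ca a2 := by
      by_cases h1 : a1 = 0
      · rw [h1, hCa0]
        exact bot_le
      · by_cases h2 : a1 = 1
        · by_cases h3 : a2 = 1
          · rw [h2, h3]
          · have h4 : ¬(a2 = 0) := by omega
            simp only [Ca, if_neg h4, if_neg h3]
            exact le_top
        · have h3 : ¬(a2 = 0) := by omega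
          have h4 : ¬(a2 = 1) := by omega
          simp only [Ca, if_neg h3, if_neg h4]
          exact le_top
    exact Subgroup.prod_mono hCbm hCam
  · -- order-forward
    rintro H K ⟨⟨a1, b1⟩, hi⟩ ⟨⟨a2, b2⟩, hj⟩ hHK ⟨e1⟩ ⟨e2⟩
    have h1 : Nat.card H = p ^ (a1 + b1) := by
      rw [Nat.card_congr e1.toEquiv, hr ⟨(a1, b1), hi⟩]
    have h2 : Nat.card K = p ^ (a2 + b2) := by
      rw [Nat.card_congr e2.toEquiv, hr ⟨(a2, b2), hj⟩]
    have hdvd := Subgroup.card_dvd_of_le hHK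
    rw [h1, h2] at hdvd
    have hsum : a1 + b1 ≤ a2 + b2 := (Nat.pow_dvd_pow_iff_le_right hp.one_lt).mp hdvd
    obtain ⟨hba1, ha1, hb1⟩ := hi
    obtain ⟨hba2, ha2, hb2⟩ := hj
    by_cases hcomp : a1 ≤ a2 ∧ b1 ≤ b2
    · exact hcomp
    · exfalso
      have hdisj : (a1 = 2 ∧ b1 = 0 ∧ a2 = 1 ∧ b2 = 1) ∨
          (a1 = 1 ∧ b1 = 1 ∧ a2 = 2 ∧ b2 = 0) := by omega
      have hsumeq : a1 + b1 = a2 + b2 := by omega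
      have hcard : Nat.card K ≤ Nat.card H := by
        rw [h1, h2, hsumeq]
      have hHeq : H = K := Subgroup.eq_of_le_of_card_ge hHK hcard
      subst hHeq
      have e3 := e1.symm.trans e2
      rcases hdisj with ⟨h1', h2', h3', h4'⟩ | ⟨h1', h2', h3', h4'⟩
      · subst h1'; subst h2'; subst h3'; subst h4'
        exact hni ⟨e3⟩
      · subst h1'; subst h2'; subst h3'; subst h4'
        exact hni ⟨e3.symm⟩

end LemM
section Assembly

/-- Product of order isomorphisms. -/
def oiProdCongr {α β γ δ : Type*} [LE α] [LE β] [LE γ] [LE δ]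
    (e : α ≃o β) (f : γ ≃o δ) : α × γ ≃o β × δ where
  toEquiv := e.toEquiv.prodCongr f.toEquiv
  map_rel_iff' := by
    intro a b
    simp only [Equiv.prodCongr_apply, Prod.le_def, Prod.map_fst, Prod.map_snd]
    exact and_congr e.map_rel_iff f.map_rel_iff

/-- Swapping a product of preordered types is an order isomorphism. -/
def oiProdComm (α β : Type*) [LE α] [LE β] : α × β ≃o β × α where
  toEquiv := Equiv.prodComm α β
  map_rel_iff' := by
    intro a b
    exact Prod.swap_le_swap

/-- The posets `Iso(ℤ₂ × ℤ₆ × ℤ₁₈)` and `Iso(ℤ₇ × ℤ₆₁₂₅)` are order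
isomorphic, where `ℤ_m` is the cyclic group of order `m`. -/
theorem isoClasses_example_orderIso :
    Nonempty
      (IsoClasses
          (Multiplicative (ZMod 2) × Multiplicative (ZMod 6) × Multiplicative (ZMod 18)) ≃o
        IsoClasses (Multiplicative (ZMod 7) × Multiplicative (ZMod 6125))) := by
  haveI f2 : Fact (Nat.Prime 2) := ⟨by norm_num⟩
  haveI f3 : Fact (Nat.Prime 3) := ⟨by norm_num⟩
  haveI f5 : Fact (Nat.Prime 5) := ⟨by norm_num⟩
  haveI f7 : Fact (Nat.Prime 7) := ⟨by norm_num⟩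
  -- CRT equivalences
  have e6 : Multiplicative (ZMod 6) ≃*
      Multiplicative (ZMod 2) × Multiplicative (ZMod 3) :=
    (AddEquiv.toMultiplicative
      ((ZMod.chineseRemainder (show Nat.Coprime 2 3 by decide)).toAddEquiv)).trans
      (MulEquiv.prodMultiplicative _ _)
  have e18 : Multiplicative (ZMod 18) ≃*
      Multiplicative (ZMod 2) × Multiplicative (ZMod 9) :=
    (AddEquiv.toMultiplicative
      ((ZMod.chineseRemainder (show Nat.Coprime 2 9 by decide)).toAddEquiv)).trans
      (MulEquiv.prodMultiplicative _ _)
  have e6125 : Multiplicative (ZMod 6125) ≃*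
      Multiplicative (ZMod 49) × Multiplicative (ZMod 125) :=
    (AddEquiv.toMultiplicative
      ((ZMod.chineseRemainder (show Nat.Coprime 49 125 by decide)).toAddEquiv)).trans
      (MulEquiv.prodMultiplicative _ _)
  -- regroupings
  have eG1 : (Multiplicative (ZMod 2) × Multiplicative (ZMod 6) × Multiplicative (ZMod 18)) ≃*
      ((Multiplicative (ZMod 2) × (Multiplicative (ZMod 2) × Multiplicative (ZMod 2))) ×
        (Multiplicative (ZMod 3) × Multiplicative (ZMod 9))) :=
    (((MulEquiv.refl (Multiplicative (ZMod 2))).prodCongr (e6.prodCongr e18)).trans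
      ((MulEquiv.refl (Multiplicative (ZMod 2))).prodCongr
        (MulEquiv.prodProdProdComm _ _ _ _))).trans
      MulEquiv.prodAssoc.symm
  have eG2 : (Multiplicative (ZMod 7) × Multiplicative (ZMod 6125)) ≃*
      ((Multiplicative (ZMod 7) × Multiplicative (ZMod 49)) × Multiplicative (ZMod 125)) :=
    ((MulEquiv.refl (Multiplicative (ZMod 7))).prodCongr e6125).trans
      MulEquiv.prodAssoc.symm
  -- coprime cardinalities
  have hcop1 : (Nat.card (Multiplicative (ZMod 2) ×
      (Multiplicative (ZMod 2) × Multiplicative (ZMod 2)))).Coprime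
      (Nat.card (Multiplicative (ZMod 3) × Multiplicative (ZMod 9))) := by
    simp only [Nat.card_prod, card_multZMod]
    decide
  have hcop2 : (Nat.card (Multiplicative (ZMod 7) × Multiplicative (ZMod 49))).Coprime
      (Nat.card (Multiplicative (ZMod 125))) := by
    simp only [Nat.card_prod, card_multZMod]
    decide
  -- assemble
  obtain ⟨j1⟩ := nonempty_orderIso_congr eG1
  obtain ⟨jp1⟩ := nonempty_orderIso_prod hcop1
  obtain ⟨eE⟩ := lemE 2
  obtain ⟨eM3⟩ := lemM 3
  obtain ⟨j2⟩ := nonempty_orderIso_congr eG2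
  obtain ⟨jp2⟩ := nonempty_orderIso_prod hcop2
  obtain ⟨eM7⟩ := lemM 7
  obtain ⟨eC⟩ := lemC 5
  exact ⟨((((j1.trans jp1).trans (oiProdCongr eE eM3)).trans
      (oiProdComm (Fin 4) MP)).trans
      ((jp2.trans (oiProdCongr eM7 eC)).symm)).trans j2.symm⟩

end Assembly
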